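/- Assume G is p-nilpotent, i.e., G has a normal subgroup of order prime to p whose quotient is a p-group, and let F be a field of characteristic p. Then the map from Hom(G, F^×) to the group of coherent G-stable tuples of linear characters with values in F, sending a homomorphism φ : G → F^× to the tuple whose P-component is the restriction of φ to N_G(P), is a group isomorphism. -/

import Mathlib

/-!  Common definitions: representations of finite groups over a commutative ring,
direct summands, permutation modules, vertices, Brauer-type trivial parts, characters,
p-parts of group elements, coherent tuples.  -/

open scoped TensorProduct

universe u v w

section Defs

variable {k : Type u} [CommSemiring k]

/-- `ρ` is isomorphic to a direct summand of `σ`, equivariantly. -/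
def IsSummand {G : Type*} [Monoid G] {V : Type*} [AddCommMonoid V] [Module k V]
    {W : Type*} [AddCommMonoid W] [Module k W]
    (ρ : Representation k G V) (σ : Representation k G W) : Prop :=
  ∃ (i : V →ₗ[k] W) (π : W →ₗ[k] V),
    (∀ g v, i (ρ g v) = σ g (i v)) ∧ (∀ g w, π (σ g w) = ρ g (π w)) ∧ ∀ v, π (i v) = v

/-- equivariant isomorphism of representations -/
def RepEquiv {G : Type*} [Monoid G] {V : Type*} [AddCommMonoid V] [Module k V]
    {W : Type*} [AddCommMonoid W] [Module k W]
    (ρ : Representation k G V) (σ : Representation k G W) : Prop :=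
  ∃ e : V ≃ₗ[k] W, ∀ g v, e (ρ g v) = σ g (e v)

/-- the direct sum of two representations -/
def prodRep {G : Type*} [Monoid G] {V : Type*} [AddCommMonoid V] [Module k V]
    {W : Type*} [AddCommMonoid W] [Module k W]
    (ρ : Representation k G V) (σ : Representation k G W) :
    Representation k G (V × W) where
  toFun g := (ρ g).prodMap (σ g)
  map_one' := by apply LinearMap.ext; intro v; simp
  map_mul' g h := by apply LinearMap.ext; intro v; simp

/-- the permutation representation attached to an action of `G` on `X` by permutations -/
def permRep {G : Type*} [Group G] (X : Type*) (a : G →* Equiv.Perm X) :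
    Representation k G (X → k) where
  toFun g := LinearMap.funLeft k k (a g⁻¹)
  map_one' := by apply LinearMap.ext; intro f; simp [LinearMap.funLeft]
  map_mul' g h := by
    apply LinearMap.ext; intro f; funext x
    simp [LinearMap.funLeft, mul_inv_rev]

/-- a p-permutation module over `k`: a module isomorphic to a direct summand of a
permutation module `k[X]` for a finite `G`-set `X` -/
def IsPermutationSummand {G : Type*} [Group G] {V : Type*} [AddCommMonoid V] [Module k V]
    (ρ : Representation k G V) : Prop :=
  ∃ (X : Type u) (a : G →* Equiv.Perm X), Finite X ∧ IsSummand ρ (permRep X a)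

/-- an indecomposable representation: nonzero, and every equivariant idempotent
endomorphism is `0` or the identity -/
def IsIndecomposableRep {G : Type*} [Monoid G] {V : Type*} [AddCommMonoid V] [Module k V]
    (ρ : Representation k G V) : Prop :=
  (∃ v : V, v ≠ 0) ∧ ∀ f : V →ₗ[k] V,
    (∀ g v, f (ρ g v) = ρ g (f v)) → (∀ v, f (f v) = f v) →
      (∀ v, f v = 0) ∨ (∀ v, f v = v)

/-- the carrier of the induced module `Ind_H^G (Res_H^G ρ)`:
functions `f : G → V` with `f (h * g) = ρ h (f g)` for `h ∈ H` -/
def indResCarrier {G : Type*} [Group G] {V : Type*} [AddCommMonoid V] [Module k V]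
    (ρ : Representation k G V) (H : Subgroup G) : Submodule k (G → V) where
  carrier := {f | ∀ (h : H) (g : G), f (↑h * g) = ρ ↑h (f g)}
  add_mem' := by
    intro f g hf hg h x
    simp only [Pi.add_apply, hf h x, hg h x, map_add]
  zero_mem' := by intro h x; simp
  smul_mem' := by
    intro c f hf h x
    simp only [Pi.smul_apply, hf h x, map_smul]

/-- the representation `Ind_H^G (Res_H^G ρ)`, with `G` acting by right translation -/
def indResRep {G : Type*} [Group G] {V : Type*} [AddCommMonoid V] [Module k V]
    (ρ : Representation k G V) (H : Subgroup G) :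
    Representation k G (indResCarrier ρ H) where
  toFun g :=
    { toFun := fun f => ⟨fun x => (f : G → V) (x * g), fun h x => by
        simpa [mul_assoc] using f.2 h (x * g)⟩
      map_add' := fun f₁ f₂ => rfl
      map_smul' := fun c f => rfl }
  map_one' := by
    apply LinearMap.ext; intro f; apply Subtype.ext; funext x; simp
  map_mul' g₁ g₂ := by
    apply LinearMap.ext; intro f; apply Subtype.ext; funext x
    show (f : G → V) (x * (g₁ * g₂)) = (f : G → V) (x * g₁ * g₂)
    rw [mul_assoc]

/-- `ρ` is relatively `H`-projective in the sense that it is a direct summand of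
`Ind_H^G (Res_H^G ρ)` -/
def IsRelativelyProjective {G : Type*} [Group G] {V : Type*} [AddCommMonoid V] [Module k V]
    (ρ : Representation k G V) (H : Subgroup G) : Prop :=
  IsSummand ρ (indResRep ρ H)

/-- `Q` is a vertex of `ρ`: minimal among the subgroups `R` with
`ρ` a direct summand of `Ind_R^G (Res_R^G ρ)` -/
def IsVertex {G : Type*} [Group G] {V : Type*} [AddCommMonoid V] [Module k V]
    (ρ : Representation k G V) (Q : Subgroup G) : Prop :=
  IsRelativelyProjective ρ Q ∧ ∀ R : Subgroup G, R < Q → ¬ IsRelativelyProjective ρ R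

end Defs

/-- a bundled representation of `G` over `k` -/
structure RepOn (k : Type u) (G : Type v) [CommSemiring k] [Monoid G] :
    Type (max (u + 1) v) where
  carrier : Type u
  [isAddCommGroup : AddCommGroup carrier]
  [isModule : Module k carrier]
  ρ : Representation k G carrier

attribute [instance] RepOn.isAddCommGroup RepOn.isModule

section Defs2

variable {k : Type u} [CommSemiring k]

/-- the subgroup `P` acts trivially on the representation `σ` -/
def TrivialOn {Γ : Type*} [Group Γ] {V : Type*} [AddCommMonoid V] [Module k V]
    (σ : Representation k Γ V) (P : Subgroup Γ) : Prop :=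
  ∀ x ∈ P, ∀ v : V, σ x v = v

/-- `A` is a `P`-trivial part of `σ`: `σ ≅ A ⊕ B` where `P` acts trivially on `A` and
no nonzero direct summand of `B` has trivial `P`-action -/
def IsTrivialPartFor {Γ : Type v} [Group Γ] {V : Type*} [AddCommMonoid V] [Module k V]
    (σ : Representation k Γ V) (P : Subgroup Γ) (A : RepOn k Γ) : Prop :=
  TrivialOn A.ρ P ∧
  ∃ B : RepOn k Γ, RepEquiv σ (prodRep A.ρ B.ρ) ∧
    ∀ U : RepOn k Γ, IsSummand U.ρ B.ρ → TrivialOn U.ρ P → ∀ u : U.carrier, u = 0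

/-- `A` is a `P`-trivial part `M_P` of `ρ`: a direct summand of
`Res^G_{N_G(P)} ρ` with trivial `P`-action whose complement has no nonzero direct
summand with trivial `P`-action -/
def IsPTrivialPart {G : Type v} [Group G] {V : Type*} [AddCommMonoid V] [Module k V]
    (ρ : Representation k G V) (P : Subgroup G) (A : RepOn k ↥(Subgroup.normalizer (P : Set G))) : Prop :=
  IsTrivialPartFor (ρ.comp (Subgroup.normalizer (P : Set G)).subtype) (P.subgroupOf (Subgroup.normalizer (P : Set G))) A

end Defs2

/-- the character value at `x` of the `K ⊗ₖ -` base change of the representation `σ` -/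
noncomputable def charAt {k : Type u} [CommRing k] (K : Type v) [CommRing K] [Algebra k K]
    {Γ : Type*} [Monoid Γ] {V : Type*} [AddCommGroup V] [Module k V]
    (σ : Representation k Γ V) (x : Γ) : K :=
  LinearMap.trace K (TensorProduct k K V) (LinearMap.baseChange K (σ x))

/-- the `p`-part of a group element (of finite order) -/
noncomputable def pPart (p : ℕ) {G : Type*} [Group G] (x : G) : G :=
  x ^ ((orderOf x / p ^ (orderOf x).factorization p) *
    (((orderOf x / p ^ (orderOf x).factorization p : ℕ) :
        ZMod (p ^ (orderOf x).factorization p))⁻¹).val)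

/-- the `p'`-part of a natural number -/
def pPrimePart (p n : ℕ) : ℕ := n / p ^ n.factorization p

/-- the conjugate subgroup `g P g⁻¹` -/
def conjSubgroup {G : Type*} [Group G] (g : G) (P : Subgroup G) : Subgroup G :=
  Subgroup.map (MulAut.conj g).toMonoidHom P

/-- `(ρM, ρN)` is an orthogonal unit pair:
`(M ⊗ M°) ⊕ (N ⊗ N°) ≅ k ⊕ (M ⊗ N°) ⊕ (N ⊗ M°)` equivariantly, i.e.
`[M] - [N]` is an orthogonal unit of the trivial source ring -/
def IsOrthogonalUnitPair {k : Type u} [CommRing k] {G : Type v} [Group G]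
    {V : Type*} [AddCommGroup V] [Module k V] {W : Type*} [AddCommGroup W] [Module k W]
    (ρM : Representation k G V) (ρN : Representation k G W) : Prop :=
  RepEquiv (prodRep (ρM.tprod ρM.dual) (ρN.tprod ρN.dual))
    (prodRep (Representation.trivial k (G := G) (V := k)) (prodRep (ρM.tprod ρN.dual) (ρN.tprod ρM.dual)))

/-- the type of `p`-subgroups of `G` -/
def pSubgroup (p : ℕ) (G : Type*) [Group G] : Type _ := {P : Subgroup G // IsPGroup p ↥P}

/-- a coherent `G`-stable tuple of linear characters:
`P ≤ ker φ_P`, `G`-stability, and the coherence condition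
`φ_P(x) = φ_{P⟨x_p⟩}(x)` for `x ∈ N_G(P)` -/
def CoherentPred (p : ℕ) {G : Type*} [Group G] {L : Type*} [CommMonoid L]
    (φ : ∀ P : pSubgroup p G, ↥(Subgroup.normalizer (P.1 : Set G)) →* Lˣ) : Prop :=
  (∀ (P : pSubgroup p G) (x : G) (hx : x ∈ P.1),
      φ P ⟨x, Subgroup.le_normalizer hx⟩ = 1) ∧
  (∀ (P Q : pSubgroup p G) (g x : G) (hx : x ∈ (Subgroup.normalizer (P.1 : Set G))),
      Q.1 = conjSubgroup g P.1 → ∀ (hx' : g * x * g⁻¹ ∈ (Subgroup.normalizer (Q.1 : Set G))),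
      φ Q ⟨g * x * g⁻¹, hx'⟩ = φ P ⟨x, hx⟩) ∧
  (∀ (P Q : pSubgroup p G) (x : G) (hx : x ∈ (Subgroup.normalizer (P.1 : Set G))),
      Q.1 = P.1 ⊔ Subgroup.zpowers (pPart p x) → ∀ (hx' : x ∈ (Subgroup.normalizer (Q.1 : Set G))),
      φ P ⟨x, hx⟩ = φ Q ⟨x, hx'⟩)

/-- the group of coherent `G`-stable tuples of linear characters with values in `L` -/
def coherentTuples (p : ℕ) (G : Type w) [Group G] (L : Type v) [CommMonoid L] :
    Subgroup (∀ P : pSubgroup p G, ↥(Subgroup.normalizer (P.1 : Set G)) →* Lˣ) where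
  carrier := {φ | CoherentPred p φ}
  one_mem' := ⟨fun _ _ _ => rfl, fun _ _ _ _ _ _ _ => rfl, fun _ _ _ _ _ _ => rfl⟩
  mul_mem' := by
    intro a b ha hb
    refine ⟨fun P x hx => ?_, fun P Q g x hx hQ hx' => ?_, fun P Q x hx hQ hx' => ?_⟩
    · show a P _ * b P _ = 1
      rw [ha.1 P x hx, hb.1 P x hx, mul_one]
    · show a Q _ * b Q _ = a P _ * b P _
      rw [ha.2.1 P Q g x hx hQ hx', hb.2.1 P Q g x hx hQ hx']
    · show a P _ * b P _ = a Q _ * b Q _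
      rw [ha.2.2 P Q x hx hQ hx', hb.2.2 P Q x hx hQ hx']
  inv_mem' := by
    intro a ha
    refine ⟨fun P x hx => ?_, fun P Q g x hx hQ hx' => ?_, fun P Q x hx hQ hx' => ?_⟩
    · show (a P _)⁻¹ = 1
      rw [ha.1 P x hx, inv_one]
    · show (a Q _)⁻¹ = (a P _)⁻¹
      rw [ha.2.1 P Q g x hx hQ hx']
    · show (a P _)⁻¹ = (a Q _)⁻¹
      rw [ha.2.2 P Q x hx hQ hx']


/-!
Write `x = x_p · x_{p'}`. Every homomorphism into `Fˣ` kills `p`-elements, because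
`t ^ p ^ k = 1` forces `(t - 1) ^ p ^ k = 0` in characteristic `p`; so only values at
`p'`-elements matter. In a `p`-nilpotent group a `p'`-element `w` normalizing a
`p`-subgroup `P` lies in the normal `p'`-complement, hence centralizes `P`. For `Q < P` the
normalizer condition in `P` gives `u ∈ P \ Q` normalizing `Q`; since `(u w)_p = u`,
coherence at `Q` and `Q⟨u⟩` gives `φ_Q(w) = φ_{Q⟨u⟩}(w)`. Climbing from `1` to `P` yields
`φ_P(x) = φ_1(x)`, so a coherent tuple is determined by the character `φ_1` of `G`.
-/

open Subgroup

section

variable {p : ℕ}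

theorem disjoint_of_coprime_card {G : Type*} [Group G] {N P : Subgroup G} (hP : IsPGroup p P)
    (hN : (Nat.card N).Coprime p) : Disjoint P N := by
  refine disjoint_def.mpr fun {g} hgP hgN => ?_
  have hg : orderOf g ∣ Nat.card N := by
    simpa using orderOf_dvd_natCard (⟨g, hgN⟩ : N)
  have hcop := hP.orderOf_coprime hN.symm ⟨g, hgP⟩
  rw [orderOf_mk] at hcop
  exact orderOf_eq_one_iff.mp (hcop.eq_one_of_dvd hg)

variable [Fact p.Prime]

theorem Units.eq_one_of_pow_prime_pow_eq_one {F : Type*} [Field F] [CharP F p] {t : Fˣ}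
    {k : ℕ} (h : t ^ p ^ k = 1) : t = 1 := by
  have : ExpChar F p := ExpChar.prime Fact.out
  have h' : (t : F) ^ (p ^ k * 1) = 1 := by simpa using congrArg Units.val h
  exact Units.ext (by simpa using (ExpChar.pow_prime_pow_mul_eq_one_iff p k 1 (t : F)).mp h')

theorem MonoidHom.map_mul_eq_right_of_pow_prime_pow_eq_one {G F : Type*} [Group G] [Field F]
    [CharP F p] {H : Subgroup G} (f : H →* Fˣ) {u w : G} (hu : u ∈ H) (hw : w ∈ H) {k : ℕ}
    (hpow : u ^ p ^ k = 1) : f ⟨u * w, mul_mem hu hw⟩ = f ⟨w, hw⟩ := by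
  have hpow' : (⟨u, hu⟩ : H) ^ p ^ k = 1 := Subtype.ext (by simpa using hpow)
  have hfu : f ⟨u, hu⟩ = 1 :=
    Units.eq_one_of_pow_prime_pow_eq_one (by rw [← map_pow, hpow', map_one])
  rw [← one_mul (f ⟨w, hw⟩), ← hfu, ← map_mul]
  rfl

section pPart

variable {G : Type*} [Group G]

theorem exists_pow_eq_pPart (x : G) :
    ∃ e : ℕ, pPart p x = x ^ e ∧ e ≡ 1 [MOD p ^ (orderOf x).factorization p] ∧
      ordCompl[p] (orderOf x) ∣ e := by
  set k := (orderOf x).factorization p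
  set m := ordCompl[p] (orderOf x)
  refine ⟨m * ((m : ZMod (p ^ k))⁻¹).val, rfl, ?_, dvd_mul_right _ _⟩
  have : NeZero (p ^ k) := ⟨pow_ne_zero _ (Fact.out : p.Prime).ne_zero⟩
  by_cases hx : orderOf x = 0
  · simp [k, hx, Nat.modEq_one]
  have hcop : m.Coprime (p ^ k) :=
    (Nat.coprime_ordCompl (Fact.out : p.Prime) hx).symm.pow_right k
  rw [← ZMod.natCast_eq_natCast_iff, Nat.cast_mul, ZMod.natCast_val, ZMod.cast_id,
    ZMod.coe_mul_inv_eq_one m hcop, Nat.cast_one]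

theorem pPart_mem {H : Subgroup G} {x : G} (hx : x ∈ H) : pPart p x ∈ H := by
  obtain ⟨e, he, -⟩ := exists_pow_eq_pPart (p := p) x
  exact he ▸ pow_mem hx e

theorem pPart_pow_prime_pow (x : G) : pPart p x ^ p ^ (orderOf x).factorization p = 1 := by
  obtain ⟨e, he, -, hme⟩ := exists_pow_eq_pPart (p := p) x
  rw [he, ← pow_mul, ← orderOf_dvd_iff_pow_eq_one, mul_comm]
  calc orderOf x = p ^ (orderOf x).factorization p * ordCompl[p] (orderOf x) :=
        (Nat.ordProj_mul_ordCompl_eq_self _ p).symm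
    _ ∣ p ^ (orderOf x).factorization p * e := mul_dvd_mul_left _ hme

theorem not_dvd_orderOf_inv_pPart_mul {x : G} (hx : IsOfFinOrder x) :
    ¬ p ∣ orderOf ((pPart p x)⁻¹ * x) := by
  obtain ⟨e, he, he1, -⟩ := exists_pow_eq_pPart (p := p) x
  set m := ordCompl[p] (orderOf x)
  -- `(x ^ (1 - e)) ^ m = 1` because `p ^ k ∣ e - 1` and `orderOf x = p ^ k * m`
  have hpow : ((pPart p x)⁻¹ * x) ^ m = 1 := by
    rw [he, ← zpow_natCast x e, ← zpow_neg_one, ← zpow_mul, ← zpow_add_one,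
      ← zpow_natCast, ← zpow_mul, ← orderOf_dvd_iff_zpow_eq_one]
    obtain ⟨c, hc⟩ : ((p ^ (orderOf x).factorization p : ℕ) : ℤ) ∣ (e : ℤ) - 1 := by
      exact_mod_cast he1.symm.dvd
    have hord :
        ((orderOf x : ℕ) : ℤ) = ((p ^ (orderOf x).factorization p : ℕ) : ℤ) * m := by
      exact_mod_cast (Nat.ordProj_mul_ordCompl_eq_self (orderOf x) p).symm
    exact ⟨-c, by rw [hord]; linear_combination (-(m : ℤ)) * hc⟩
  exact fun hp => Nat.not_dvd_ordCompl (Fact.out : p.Prime) hx.orderOf_pos.ne'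
    (hp.trans (orderOf_dvd_of_pow_eq_one hpow))

theorem pPart_mul_of_commute {u w : G} (huw : Commute u w) {a : ℕ} (hu : u ^ p ^ a = 1)
    (hw : ¬ p ∣ orderOf w) : pPart p (u * w) = u := by
  have hp : p.Prime := Fact.out
  obtain ⟨b, -, hub⟩ := (Nat.dvd_prime_pow hp).mp (orderOf_dvd_of_pow_eq_one hu)
  have hw0 : orderOf w ≠ 0 := fun h => hw (h ▸ dvd_zero p)
  have horder : orderOf (u * w) = p ^ b * orderOf w := by
    rw [huw.orderOf_mul_eq_mul_orderOf_of_coprime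
      (hub ▸ ((hp.coprime_iff_not_dvd.mpr hw).pow_left b)), hub]
  have hfact : (orderOf (u * w)).factorization p = b := by
    rw [horder, Nat.factorization_mul (pow_ne_zero b hp.ne_zero) hw0]
    simp [hp.factorization_pow, Nat.factorization_eq_zero_of_not_dvd hw]
  have hcompl : ordCompl[p] (orderOf (u * w)) = orderOf w := by
    rw [hfact, horder, Nat.mul_div_cancel_left _ (pow_pos hp.pos b)]
  obtain ⟨e, he, he1, hme⟩ := exists_pow_eq_pPart (p := p) (u * w)
  have hwe : w ^ e = 1 := orderOf_dvd_iff_pow_eq_one.mp (hcompl ▸ hme)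
  have hue : u ^ e = u ^ 1 := pow_eq_pow_iff_modEq.mpr (hub ▸ hfact ▸ he1)
  rw [he, huw.mul_pow, hwe, hue, pow_one, mul_one]

end pPart

theorem MonoidHom.map_eq_map_inv_pPart_mul {G F : Type*} [Group G] [Field F] [CharP F p]
    {H : Subgroup G} (f : H →* Fˣ) {x : G} (hx : x ∈ H) :
    f ⟨x, hx⟩ = f ⟨(pPart p x)⁻¹ * x, mul_mem (inv_mem (pPart_mem hx)) hx⟩ := by
  have hw : (pPart p x)⁻¹ * x ∈ H := mul_mem (inv_mem (pPart_mem hx)) hx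
  calc f ⟨x, hx⟩ = f ⟨pPart p x * ((pPart p x)⁻¹ * x), mul_mem (pPart_mem hx) hw⟩ :=
        congrArg f (Subtype.ext (mul_inv_cancel_left _ _).symm)
    _ = _ := f.map_mul_eq_right_of_pow_prime_pow_eq_one (pPart_mem hx) hw (pPart_pow_prime_pow x)

section pNilpotent

variable {G : Type*} [Group G] {N : Subgroup G}

theorem mem_of_not_dvd_orderOf [N.Normal] (hquot : IsPGroup p (G ⧸ N)) {w : G}
    (hw : ¬ p ∣ orderOf w) : w ∈ N := by
  have hcop : (orderOf (w : G ⧸ N)).Coprime (orderOf w) :=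
    hquot.orderOf_coprime ((Nat.Prime.coprime_iff_not_dvd Fact.out).mpr hw) _
  exact (QuotientGroup.eq_one_iff w).mp <| orderOf_eq_one_iff.mp <|
    hcop.eq_one_of_dvd (orderOf_map_dvd (QuotientGroup.mk' N) w)

theorem mem_centralizer_of_mem_normalizer [N.Normal] (hN : (Nat.card N).Coprime p)
    (hquot : IsPGroup p (G ⧸ N)) {P : Subgroup G} (hP : IsPGroup p P) {w : G}
    (hwP : w ∈ normalizer (P : Set G)) (hw : ¬ p ∣ orderOf w) :
    w ∈ centralizer (P : Set G) := by
  have hwN := mem_of_not_dvd_orderOf hquot hw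
  refine mem_centralizer_iff.mpr fun u hu => ?_
  have hcP : w * u * w⁻¹ * u⁻¹ ∈ P :=
    mul_mem ((mem_normalizer_iff.mp hwP u).mp hu) (inv_mem hu)
  have hcN : w * u * w⁻¹ * u⁻¹ ∈ N := by
    simpa [mul_assoc] using mul_mem hwN (‹N.Normal›.conj_mem _ (inv_mem hwN) u)
  have hc := disjoint_def.mp (disjoint_of_coprime_card hP hN) hcP hcN
  rw [← commutatorElement_def, commutatorElement_eq_one_iff_mul_comm] at hc
  exact hc.symm

end pNilpotent

theorem IsPGroup.exists_mem_normalizer_notMem {G : Type*} [Group G] [Finite G]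
    {P Q : Subgroup G} (hP : IsPGroup p P) (hQP : Q < P) :
    ∃ u ∈ P, u ∈ normalizer (Q : Set G) ∧ u ∉ Q := by
  have : Group.IsNilpotent P := hP.isNilpotent
  have hlt : Q.subgroupOf P < ⊤ :=
    lt_top_iff_ne_top.mpr fun h => hQP.not_ge (subgroupOf_eq_top.mp h)
  obtain ⟨u, hu, huQ⟩ := SetLike.exists_of_lt (Group.normalizerCondition_of_isNilpotent _ hlt)
  rw [← subgroupOf_normalizer_eq hQP.le, mem_subgroupOf] at hu
  exact ⟨u, u.2, hu, huQ⟩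

theorem mem_normalizer_bot {G : Type*} [Group G] (x : G) :
    x ∈ normalizer ((⊥ : Subgroup G) : Set G) := by
  rw [normalizer_eq_top_iff.mpr inferInstance]
  trivial

instance {G : Type*} [Group G] : Bot (pSubgroup p G) := ⟨⟨⊥, IsPGroup.of_bot⟩⟩

namespace CoherentPred

variable {G : Type*} [Group G] {F : Type*} [Field F] [CharP F p]
  {Φ : ∀ P : pSubgroup p G, normalizer (P.1 : Set G) →* Fˣ}

theorem apply_eq_of_eq_sup_zpowers (hΦ : CoherentPred p Φ) {P Q : pSubgroup p G} {u w : G}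
    (huw : Commute u w) {k : ℕ} (hu : u ^ p ^ k = 1) (hw : ¬ p ∣ orderOf w)
    (hQ : Q.1 = P.1 ⊔ zpowers u) (huP : u ∈ normalizer (P.1 : Set G))
    (hwP : w ∈ normalizer (P.1 : Set G)) (hwQ : w ∈ normalizer (Q.1 : Set G)) :
    Φ P ⟨w, hwP⟩ = Φ Q ⟨w, hwQ⟩ := by
  have huQ : u ∈ normalizer (Q.1 : Set G) :=
    le_normalizer (hQ ▸ mem_sup_right (mem_zpowers u))
  have := hΦ.2.2 P Q (u * w) (mul_mem huP hwP) (by rw [pPart_mul_of_commute huw hu hw]; exact hQ)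
    (mul_mem huQ hwQ)
  rwa [(Φ P).map_mul_eq_right_of_pow_prime_pow_eq_one huP hwP hu,
    (Φ Q).map_mul_eq_right_of_pow_prime_pow_eq_one huQ hwQ hu] at this

theorem apply_eq_of_le [Finite G] (hΦ : CoherentPred p Φ) {P : pSubgroup p G} {w : G}
    (hw : ¬ p ∣ orderOf w) (hwP : w ∈ centralizer (P.1 : Set G)) (Q : pSubgroup p G)
    (hQP : Q.1 ≤ P.1) (hwQ : w ∈ normalizer (Q.1 : Set G))
    (hwP' : w ∈ normalizer (P.1 : Set G)) : Φ Q ⟨w, hwQ⟩ = Φ P ⟨w, hwP'⟩ := by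
  obtain ⟨Q, hQ⟩ := Q
  induction Q using WellFoundedGT.induction with
  | _ Q ih =>
  rcases hQP.eq_or_lt with rfl | hlt
  · rfl
  obtain ⟨u, huP, huQ, hu⟩ := P.2.exists_mem_normalizer_notMem hlt
  obtain ⟨k, hk⟩ := P.2 ⟨u, huP⟩
  have hQ'P : Q ⊔ zpowers u ≤ P.1 := sup_le hlt.le (zpowers_le.mpr huP)
  have hQQ' : Q < Q ⊔ zpowers u :=
    lt_of_le_of_ne le_sup_left fun h => hu (h.ge (mem_sup_right (mem_zpowers u)))
  have hwQ' : w ∈ normalizer ((Q ⊔ zpowers u : Subgroup G) : Set G) :=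
    centralizer_le_normalizer _ (centralizer_le hQ'P hwP)
  calc Φ ⟨Q, hQ⟩ ⟨w, hwQ⟩ = Φ ⟨Q ⊔ zpowers u, P.2.to_le hQ'P⟩ ⟨w, hwQ'⟩ :=
        hΦ.apply_eq_of_eq_sup_zpowers (mem_centralizer_iff.mp hwP u huP) (by simpa using hk) hw
          rfl huQ hwQ hwQ'
    _ = Φ P ⟨w, hwP'⟩ := ih _ hQQ' _ hQ'P hwQ'

theorem apply_eq_apply_bot [Finite G] (hΦ : CoherentPred p Φ) {N : Subgroup G} [N.Normal]
    (hN : (Nat.card N).Coprime p) (hquot : IsPGroup p (G ⧸ N)) (P : pSubgroup p G) {x : G}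
    (hx : x ∈ normalizer (P.1 : Set G)) :
    Φ P ⟨x, hx⟩ = Φ ⊥ ⟨x, mem_normalizer_bot x⟩ := by
  have hwP : (pPart p x)⁻¹ * x ∈ normalizer (P.1 : Set G) :=
    mul_mem (inv_mem (pPart_mem hx)) hx
  have hw := not_dvd_orderOf_inv_pPart_mul (p := p) (isOfFinOrder_of_finite x)
  rw [(Φ P).map_eq_map_inv_pPart_mul hx, (Φ ⊥).map_eq_map_inv_pPart_mul]
  exact (hΦ.apply_eq_of_le hw (mem_centralizer_of_mem_normalizer hN hquot P.2 hwP hw) ⊥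
    bot_le _ _).symm

end CoherentPred

theorem coherentPred_comp_subtype {G F : Type*} [Group G] [Field F] [CharP F p]
    (φ : G →* Fˣ) :
    CoherentPred p fun P : pSubgroup p G => φ.comp (normalizer (P.1 : Set G)).subtype := by
  refine ⟨fun P x hx => ?_, fun P Q g x hx _ hx' => ?_, fun _ _ _ _ _ _ => rfl⟩
  · obtain ⟨k, hk⟩ := P.2 ⟨x, hx⟩
    exact Units.eq_one_of_pow_prime_pow_eq_one (k := k) <| by
      simpa [← map_pow] using congrArg (φ.comp P.1.subtype) hk
  · change φ (g * x * g⁻¹) = φ x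
    rw [map_mul, map_mul, map_inv, mul_inv_cancel_comm]

end

theorem statement15 (p : ℕ) [Fact p.Prime]
    (G : Type w) [Group G] [Finite G]
    (F : Type v) [Field F] [CharP F p]
    (N : Subgroup G) [N.Normal] (hN : Nat.Coprime (Nat.card ↥N) p)
    (hquot : IsPGroup p (G ⧸ N)) :
    ∃ e : (G →* Fˣ) ≃* ↥(coherentTuples p G F),
      ∀ (φ : G →* Fˣ) (P : pSubgroup p G) (x : ↥(Subgroup.normalizer (P.1 : Set G))),
        (e φ).1 P x = φ (x : G) := by
  refine ⟨{ toFun := fun φ => ⟨fun P => φ.comp (normalizer (P.1 : Set G)).subtype,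
              coherentPred_comp_subtype φ⟩
            invFun := fun Φ => (Φ.1 ⊥).comp ((MonoidHom.id G).codRestrict _ mem_normalizer_bot)
            left_inv := fun φ => rfl
            right_inv := fun Φ => Subtype.ext <| funext fun P => MonoidHom.ext fun x =>
              (Φ.2.apply_eq_apply_bot hN hquot P x.2).symm
            map_mul' := fun φ ψ => rfl }, fun φ P x => rfl⟩
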